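/- Let A_1 be an n_1×n_2 complex matrix and A_2 an n_2×n_3 complex matrix with rank A_1 + rank A_2 > n_2, let A be the n×n block matrix on ℂⁿ = ℂ^{n₁} ⊕ ℂ^{n₂} ⊕ ℂ^{n₃} with blocks A_1 in position (1,2) and A_2 in position (2,3) and zeros elsewhere, and let A''' be the 3×3 matrix with (1,2) entry γ(A_1), (2,3) entry γ(A_2), and all other entries zero. Then w(A) ≥ w(A'''). -/

import Mathlib

/-- The numerical radius `w(M)` of a square complex matrix, acting on Euclidean space:
`w(M) = sup {|⟨Mx, x⟩| : ‖x‖ = 1}` (here `inner x (M x)` is Mathlib's inner product, conjugate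
linear in the first variable, so it equals the paper's `⟨Mx, x⟩`). -/
noncomputable def numRadius {ι : Type*} [Fintype ι] [DecidableEq ι] (M : Matrix ι ι ℂ) : ℝ :=
  sSup {r : ℝ | ∃ x : EuclideanSpace ℂ ι, ‖x‖ = 1 ∧
    ‖(inner ℂ x (Matrix.toEuclideanLin M x) : ℂ)‖ = r}

open Classical in
/-- The reduced minimum modulus `γ(A) = min {‖Ax‖ : ‖x‖ = 1, x ⊥ ker A}` for `A ≠ 0`,
and `γ(0) = 0`. -/
noncomputable def reducedMinModulus {m n : Type*} [Fintype m] [Fintype n] [DecidableEq n]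
    (A : Matrix m n ℂ) : ℝ :=
  if A = 0 then 0 else
    sInf {r : ℝ | ∃ x : EuclideanSpace ℂ n, ‖x‖ = 1 ∧
      x ∈ (LinearMap.ker (Matrix.toEuclideanLin A))ᗮ ∧ ‖Matrix.toEuclideanLin A x‖ = r}

/-!
The rank condition forces `range A₂` to meet `(ker A₁)ᗮ` in a unit vector `y`. Then
`A₁ y = s u₁` and `A₂ u₃ = t y` for unit vectors `u₁`, `u₃` with `u₃ ⊥ ker A₂`, and `s ≥ γ(A₁)`,
`t ≥ γ(A₂)` by the definition of `γ`. Given a unit `c ∈ ℂ³`, the unit vector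
`x = (|c₀| u₁, |c₁| y, |c₂| u₃)` has `⟨Ax, x⟩ = s |c₀||c₁| + t |c₁||c₂|`, which dominates
`|⟨A'''c, c⟩| ≤ γ(A₁) |c₀||c₁| + γ(A₂) |c₁||c₂|`.
-/

open Matrix Module LinearMap
open scoped InnerProductSpace ComplexConjugate

section NumRadius

variable {ι κ : Type*} [Fintype ι] [DecidableEq ι] [Fintype κ] [DecidableEq κ]

lemma numRadius_nonneg (M : Matrix ι ι ℂ) : 0 ≤ numRadius M :=
  Real.sSup_nonneg (by rintro _ ⟨x, -, rfl⟩; positivity)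

lemma norm_inner_le_numRadius (M : Matrix ι ι ℂ) {x : EuclideanSpace ℂ ι} (hx : ‖x‖ = 1) :
    ‖⟪x, toEuclideanLin M x⟫_ℂ‖ ≤ numRadius M := by
  set T := LinearMap.toContinuousLinearMap (toEuclideanLin M)
  refine le_csSup ⟨‖T‖, ?_⟩ ⟨x, hx, rfl⟩
  rintro _ ⟨y, hy, rfl⟩
  calc ‖⟪y, toEuclideanLin M y⟫_ℂ‖ ≤ ‖y‖ * ‖T y‖ := norm_inner_le_norm _ _
    _ ≤ ‖y‖ * (‖T‖ * ‖y‖) := by gcongr; exact T.le_opNorm y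
    _ = ‖T‖ := by rw [hy]; ring

lemma numRadius_le_numRadius_of_forall_exists {M : Matrix ι ι ℂ} {N : Matrix κ κ ℂ}
    (h : ∀ x : EuclideanSpace ℂ ι, ‖x‖ = 1 → ∃ y : EuclideanSpace ℂ κ, ‖y‖ = 1 ∧
      ‖⟪x, toEuclideanLin M x⟫_ℂ‖ ≤ ‖⟪y, toEuclideanLin N y⟫_ℂ‖) :
    numRadius M ≤ numRadius N := by
  refine Real.sSup_le ?_ (numRadius_nonneg N)
  rintro _ ⟨x, hx, rfl⟩
  obtain ⟨y, hy, hxy⟩ := h x hx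
  exact hxy.trans (norm_inner_le_numRadius N hy)

end NumRadius

section Orthogonal

variable {𝕜 E : Type*} [RCLike 𝕜] [NormedAddCommGroup E] [InnerProductSpace 𝕜 E]

lemma exists_norm_eq_one_inner_eq_norm {v : E} (hv : v ≠ 0) :
    ∃ u : E, ‖u‖ = 1 ∧ ⟪u, v⟫_𝕜 = ‖v‖ := by
  refine ⟨(‖v‖⁻¹ : 𝕜) • v, norm_smul_inv_norm hv, ?_⟩
  have : (‖v‖ : 𝕜) ≠ 0 := by exact_mod_cast norm_ne_zero_iff.mpr hv
  rw [inner_smul_left, inner_self_eq_norm_sq_to_K, map_inv₀, RCLike.conj_ofReal]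
  field_simp

lemma finrank_orthogonal_ker {G : Type*} [AddCommGroup G] [Module 𝕜 G] [FiniteDimensional 𝕜 E]
    (g : E →ₗ[𝕜] G) :
    finrank 𝕜 (ker g)ᗮ = finrank 𝕜 (range g) := by
  have := (ker g).finrank_add_finrank_orthogonal
  have := g.finrank_range_add_finrank_ker
  omega

lemma exists_norm_eq_one_mem_range_mem_orthogonal_ker {F G : Type*} [AddCommGroup F]
    [Module 𝕜 F] [AddCommGroup G] [Module 𝕜 G] [FiniteDimensional 𝕜 E] (f : F →ₗ[𝕜] E) (g : E →ₗ[𝕜] G)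
    (h : finrank 𝕜 E < finrank 𝕜 (range f) + finrank 𝕜 (range g)) :
    ∃ y : E, ‖y‖ = 1 ∧ y ∈ range f ∧ y ∈ (ker g)ᗮ := by
  have hne : range f ⊓ (ker g)ᗮ ≠ ⊥ := fun hbot ↦ by
    have := Submodule.finrank_add_finrank_le_of_disjoint (disjoint_iff.mpr hbot)
    rw [finrank_orthogonal_ker] at this
    omega
  obtain ⟨w, ⟨hwf, hwg⟩, hw⟩ := (Submodule.ne_bot_iff _).mp hne
  exact ⟨(‖w‖⁻¹ : 𝕜) • w, norm_smul_inv_norm hw, Submodule.smul_mem _ _ hwf,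
    Submodule.smul_mem _ _ hwg⟩

lemma exists_mem_orthogonal_ker_apply_eq {F : Type*} [NormedAddCommGroup F]
    [InnerProductSpace 𝕜 F] [FiniteDimensional 𝕜 F] {f : F →ₗ[𝕜] E} {y : E}
    (hy : y ∈ range f) : ∃ z ∈ (ker f)ᗮ, f z = y := by
  obtain ⟨x, rfl⟩ := hy
  obtain ⟨k, hk, z, hz, rfl⟩ := (ker f).exists_add_mem_mem_orthogonal x
  exact ⟨z, hz, by rw [map_add, hk, zero_add]⟩

end Orthogonal

section ReducedMinModulus

variable {m n : Type*} [Fintype m] [Fintype n] [DecidableEq n]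

lemma reducedMinModulus_nonneg (A : Matrix m n ℂ) : 0 ≤ reducedMinModulus A := by
  unfold reducedMinModulus
  split_ifs
  · rfl
  · exact Real.sInf_nonneg (by rintro _ ⟨x, -, -, rfl⟩; positivity)

lemma reducedMinModulus_le_norm (A : Matrix m n ℂ) {x : EuclideanSpace ℂ n} (hx : ‖x‖ = 1)
    (hxk : x ∈ (ker (toEuclideanLin A))ᗮ) : reducedMinModulus A ≤ ‖toEuclideanLin A x‖ := by
  unfold reducedMinModulus
  split_ifs
  · positivity
  · exact csInf_le ⟨0, by rintro _ ⟨y, -, -, rfl⟩; positivity⟩ ⟨x, hx, hxk, rfl⟩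

lemma rank_eq_finrank_range_toEuclideanLin (A : Matrix m n ℂ) :
    A.rank = finrank ℂ (range (toEuclideanLin A)) := by
  rw [toEuclideanLin_eq_toLin_orthonormal, ← rank_eq_finrank_range_toLin]

lemma exists_inner_apply_eq_ge_reducedMinModulus_of_mem_orthogonal_ker (A : Matrix m n ℂ)
    {y : EuclideanSpace ℂ n} (hy : ‖y‖ = 1) (hyK : y ∈ (ker (toEuclideanLin A))ᗮ) :
    ∃ u : EuclideanSpace ℂ m, ‖u‖ = 1 ∧
      ∃ s : ℝ, reducedMinModulus A ≤ s ∧ ⟪u, toEuclideanLin A y⟫_ℂ = s := by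
  have hAy : toEuclideanLin A y ≠ 0 := fun h ↦ by
    have hy0 : y ∈ ker (toEuclideanLin A) ⊓ (ker (toEuclideanLin A))ᗮ := ⟨h, hyK⟩
    rw [Submodule.inf_orthogonal_eq_bot, Submodule.mem_bot] at hy0
    simp [hy0] at hy
  obtain ⟨u, hu, hinner⟩ := exists_norm_eq_one_inner_eq_norm (𝕜 := ℂ) hAy
  exact ⟨u, hu, _, reducedMinModulus_le_norm A hy hyK, hinner⟩

lemma exists_inner_apply_eq_ge_reducedMinModulus_of_mem_range (A : Matrix m n ℂ)
    {y : EuclideanSpace ℂ m} (hy : ‖y‖ = 1) (hyR : y ∈ range (toEuclideanLin A)) :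
    ∃ u : EuclideanSpace ℂ n, ‖u‖ = 1 ∧
      ∃ t : ℝ, reducedMinModulus A ≤ t ∧ ⟪y, toEuclideanLin A u⟫_ℂ = t := by
  obtain ⟨z, hzK, rfl⟩ := exists_mem_orthogonal_ker_apply_eq hyR
  have hz : z ≠ 0 := by rintro rfl; simp at hy
  refine ⟨(‖z‖⁻¹ : ℂ) • z, norm_smul_inv_norm hz, ‖z‖⁻¹, ?_, ?_⟩
  · have := reducedMinModulus_le_norm A (norm_smul_inv_norm hz) (Submodule.smul_mem _ _ hzK)
    simpa [norm_smul, hy] using this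
  · rw [map_smul, inner_smul_right, inner_self_eq_norm_sq_to_K, hy]
    push_cast
    ring

end ReducedMinModulus

def superdiag3 (p q : ℂ) : Matrix (Fin 3) (Fin 3) ℂ :=
  !![0, p, 0; 0, 0, q; 0, 0, 0]

lemma inner_toEuclideanLin_superdiag3 (p q : ℂ) (c : EuclideanSpace ℂ (Fin 3)) :
    ⟪c, toEuclideanLin (superdiag3 p q) c⟫_ℂ = conj (c 0) * p * c 1 + conj (c 1) * q * c 2 := by
  simp [superdiag3, PiLp.inner_apply, mulVec, dotProduct, Fin.sum_univ_three]
  ring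

lemma norm_inner_toEuclideanLin_superdiag3_le {p q : ℝ} (hp : 0 ≤ p) (hq : 0 ≤ q)
    (c : EuclideanSpace ℂ (Fin 3)) :
    ‖⟪c, toEuclideanLin (superdiag3 p q) c⟫_ℂ‖ ≤ p * ‖c 0‖ * ‖c 1‖ + q * ‖c 1‖ * ‖c 2‖ := by
  rw [inner_toEuclideanLin_superdiag3]
  refine (norm_add_le _ _).trans_eq ?_
  simp only [norm_mul, Complex.norm_conj, Complex.norm_real, Real.norm_of_nonneg hp,
    Real.norm_of_nonneg hq]
  ring

section ThreeBlockShift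

variable {l m n : Type*}

def threeBlockShift (A₁ : Matrix l m ℂ) (A₂ : Matrix m n ℂ) :
    Matrix (l ⊕ m ⊕ n) (l ⊕ m ⊕ n) ℂ :=
  fromBlocks 0 (fromCols A₁ 0) 0 (fromBlocks 0 A₂ 0 0)

def blockVec3 (a : EuclideanSpace ℂ l) (b : EuclideanSpace ℂ m) (d : EuclideanSpace ℂ n) :
    EuclideanSpace ℂ (l ⊕ m ⊕ n) :=
  WithLp.toLp 2 (Sum.elim a.ofLp (Sum.elim b.ofLp d.ofLp))

variable [Fintype l] [Fintype m] [Fintype n]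

lemma norm_blockVec3_sq (a : EuclideanSpace ℂ l) (b : EuclideanSpace ℂ m)
    (d : EuclideanSpace ℂ n) : ‖blockVec3 a b d‖ ^ 2 = ‖a‖ ^ 2 + ‖b‖ ^ 2 + ‖d‖ ^ 2 := by
  simp only [blockVec3, EuclideanSpace.norm_sq_eq, Fintype.sum_sum_type, Sum.elim_inl,
    Sum.elim_inr]
  ring

variable [DecidableEq l] [DecidableEq m] [DecidableEq n]

lemma inner_toEuclideanLin_threeBlockShift (A₁ : Matrix l m ℂ) (A₂ : Matrix m n ℂ)
    (a : EuclideanSpace ℂ l) (b : EuclideanSpace ℂ m) (d : EuclideanSpace ℂ n) :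
    ⟪blockVec3 a b d, toEuclideanLin (threeBlockShift A₁ A₂) (blockVec3 a b d)⟫_ℂ =
      ⟪a, toEuclideanLin A₁ b⟫_ℂ + ⟪b, toEuclideanLin A₂ d⟫_ℂ := by
  simp [blockVec3, threeBlockShift, PiLp.inner_apply, fromBlocks_mulVec, Fintype.sum_sum_type]

lemma numRadius_superdiag3_le_numRadius_threeBlockShift (A₁ : Matrix l m ℂ) (A₂ : Matrix m n ℂ)
    {p q s t : ℝ} (hp : 0 ≤ p) (hq : 0 ≤ q) (hps : p ≤ s) (hqt : q ≤ t)
    {u₁ : EuclideanSpace ℂ l} {y : EuclideanSpace ℂ m} {u₃ : EuclideanSpace ℂ n}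
    (hu₁ : ‖u₁‖ = 1) (hy : ‖y‖ = 1) (hu₃ : ‖u₃‖ = 1)
    (hs : ⟪u₁, toEuclideanLin A₁ y⟫_ℂ = s) (ht : ⟪y, toEuclideanLin A₂ u₃⟫_ℂ = t) :
    numRadius (superdiag3 p q) ≤ numRadius (threeBlockShift A₁ A₂) := by
  refine numRadius_le_numRadius_of_forall_exists fun c hc ↦ ?_
  set a := ‖c 0‖
  set b := ‖c 1‖
  set d := ‖c 2‖
  have ha : 0 ≤ a := norm_nonneg _
  have hb : 0 ≤ b := norm_nonneg _
  have hd : 0 ≤ d := norm_nonneg _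
  set x := blockVec3 ((a : ℂ) • u₁) ((b : ℂ) • y) ((d : ℂ) • u₃)
  have hx : ‖x‖ = 1 := by
    have hc3 := EuclideanSpace.norm_sq_eq c
    rw [hc, Fin.sum_univ_three] at hc3
    rw [← pow_eq_one_iff_of_nonneg (norm_nonneg _) two_ne_zero, norm_blockVec3_sq]
    simp only [norm_smul, Complex.norm_real, Real.norm_of_nonneg, ha, hb, hd, hu₁, hy, hu₃]
    linear_combination -hc3
  have hval : ⟪x, toEuclideanLin (threeBlockShift A₁ A₂) x⟫_ℂ = ((a * b * s + b * d * t : ℝ) : ℂ) := by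
    rw [inner_toEuclideanLin_threeBlockShift]
    simp only [map_smul, inner_smul_left, inner_smul_right, hs, ht, Complex.conj_ofReal]
    push_cast
    ring
  have hps' := mul_le_mul_of_nonneg_left hps (mul_nonneg ha hb)
  have hqt' := mul_le_mul_of_nonneg_left hqt (mul_nonneg hb hd)
  refine ⟨x, hx, ?_⟩
  have hp' : 0 ≤ a * b * p := by positivity
  have hq' : 0 ≤ b * d * q := by positivity
  rw [hval, Complex.norm_real, Real.norm_of_nonneg (by linarith)]
  calc _ ≤ p * a * b + q * b * d := norm_inner_toEuclideanLin_superdiag3_le hp hq c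
    _ ≤ a * b * s + b * d * t := by linarith

end ThreeBlockShift

/-- For the 3-block shift `A` with blocks `A₁, A₂` satisfying
`rank A₁ + rank A₂ > n₂`, and `A'''` the 3×3 shift with superdiagonal `γ(A₁), γ(A₂)`, one has
`w(A) ≥ w(A''')`. -/
theorem numRadius_superdiag_reducedMinModulus_le_numRadius_three_blocks {n₁ n₂ n₃ : ℕ}
    (A₁ : Matrix (Fin n₁) (Fin n₂) ℂ) (A₂ : Matrix (Fin n₂) (Fin n₃) ℂ)
    (hrank : n₂ < A₁.rank + A₂.rank) :
    numRadius (!![0, (reducedMinModulus A₁ : ℂ), 0;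
                  0, 0, (reducedMinModulus A₂ : ℂ);
                  0, 0, 0])
      ≤ numRadius (Matrix.fromBlocks (0 : Matrix (Fin n₁) (Fin n₁) ℂ)
          (Matrix.fromCols A₁ (0 : Matrix (Fin n₁) (Fin n₃) ℂ)) 0
          (Matrix.fromBlocks (0 : Matrix (Fin n₂) (Fin n₂) ℂ) A₂ 0 0)) := by
  obtain ⟨y, hy, hyR, hyK⟩ := exists_norm_eq_one_mem_range_mem_orthogonal_ker
    (toEuclideanLin A₂) (toEuclideanLin A₁) (by
      rwa [finrank_euclideanSpace_fin, ← rank_eq_finrank_range_toEuclideanLin,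
        ← rank_eq_finrank_range_toEuclideanLin, add_comm])
  obtain ⟨u₁, hu₁, s, hs, hu₁y⟩ :=
    exists_inner_apply_eq_ge_reducedMinModulus_of_mem_orthogonal_ker A₁ hy hyK
  obtain ⟨u₃, hu₃, t, ht, hyu₃⟩ := exists_inner_apply_eq_ge_reducedMinModulus_of_mem_range A₂ hy hyR
  exact numRadius_superdiag3_le_numRadius_threeBlockShift A₁ A₂ (reducedMinModulus_nonneg A₁)
    (reducedMinModulus_nonneg A₂) hs ht hu₁ hy hu₃ hu₁y hyu₃
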